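/- arXiv:1702.02722 — 3 statements merged into one kernel-verified Lean document; each statement's English description precedes it below -/
import Mathlib

section
/- Fix 0 < β < 1, λ ≥ 1, κ > π > 0, Q, d_h with d_h > Q, and weights w_1, w_2 > 0. Define, for q ∈ [0, d_h - Q], U(q) = -λ·w_1·(π q - κ(Q + q - d_h))^β - λ·w_2·(π q)^β (with the convention 0^β = 0). Then U is strictly convex on (0, d_h - Q), and hence attains its maximum over [0, d_h - Q] at one of the endpoints q = 0 or q = d_h - Q. -/
/-- Buyer's PT utility (high reference point, binary outcomes) is strictly convex,
hence maximized at an endpoint of [0, d_h - Q]. -/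
theorem buyer_high_ref_convex (β lam κ π Q dh w1 w2 : ℝ)
    (hβ0 : 0 < β) (hβ1 : β < 1) (hlam : 1 ≤ lam)
    (hπ : 0 < π) (hκ : π < κ) (hd : Q < dh) (hw1 : 0 < w1) (hw2 : 0 < w2)
    (U : ℝ → ℝ)
    (hU : ∀ q : ℝ, U q = -lam * w1 * (π * q - κ * (Q + q - dh)) ^ β - lam * w2 * (π * q) ^ β) :
    StrictConvexOn ℝ (Set.Ioo 0 (dh - Q)) U ∧
      ∀ q ∈ Set.Icc (0:ℝ) (dh - Q), U q ≤ max (U 0) (U (dh - Q)) := by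
  have hlw1 : 0 < lam * w1 := by nlinarith
  have hlw2 : 0 < lam * w2 := by nlinarith
  have hD : 0 < dh - Q := by linarith
  -- nonnegativity of the inner arguments on [0, dh - Q]
  have hg1 : ∀ q : ℝ, 0 ≤ q → q ≤ dh - Q → 0 ≤ π * q - κ * (Q + q - dh) := by
    intro q h0 h1; nlinarith
  have hg2 : ∀ q : ℝ, 0 ≤ q → 0 ≤ π * q := fun q h0 => by positivity
  -- strict convexity on the open interval
  have hstrict : StrictConvexOn ℝ (Set.Ioo 0 (dh - Q)) U := by
    refine ⟨convex_Ioo _ _, ?_⟩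
    intro x hx y hy hxy a b ha hb hab
    have hc := Real.strictConcaveOn_rpow hβ0 hβ1
    have h1x := hg1 x hx.1.le hx.2.le
    have h1y := hg1 y hy.1.le hy.2.le
    have h2x := hg2 x hx.1.le
    have h2y := hg2 y hy.1.le
    have hne1 : π * x - κ * (Q + x - dh) ≠ π * y - κ * (Q + y - dh) := by
      intro h; apply hxy; nlinarith [h]
    have hne2 : π * x ≠ π * y := by
      intro h; apply hxy; nlinarith [h]
    have H1 := hc.2 (Set.mem_Ici.2 h1x) (Set.mem_Ici.2 h1y) hne1 ha hb hab
    have H2 := hc.2 (Set.mem_Ici.2 h2x) (Set.mem_Ici.2 h2y) hne2 ha hb hab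
    simp only [smul_eq_mul] at H1 H2 ⊢
    have e1 : π * (a * x + b * y) - κ * (Q + (a * x + b * y) - dh)
        = a * (π * x - κ * (Q + x - dh)) + b * (π * y - κ * (Q + y - dh)) := by
      linear_combination (κ * (Q - dh)) * hab
    have e2 : π * (a * x + b * y) = a * (π * x) + b * (π * y) := by ring
    rw [hU, hU, hU, e1, e2]
    nlinarith [H1, H2]
  refine ⟨hstrict, ?_⟩
  -- convexity on the closed interval
  have hconv : ConvexOn ℝ (Set.Icc 0 (dh - Q)) U := by
    refine ⟨convex_Icc _ _, ?_⟩
    intro x hx y hy a b ha hb hab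
    have hc := Real.concaveOn_rpow hβ0.le hβ1.le
    have h1x := hg1 x hx.1 hx.2
    have h1y := hg1 y hy.1 hy.2
    have h2x := hg2 x hx.1
    have h2y := hg2 y hy.1
    have H1 := hc.2 (Set.mem_Ici.2 h1x) (Set.mem_Ici.2 h1y) ha hb hab
    have H2 := hc.2 (Set.mem_Ici.2 h2x) (Set.mem_Ici.2 h2y) ha hb hab
    simp only [smul_eq_mul] at H1 H2 ⊢
    have e1 : π * (a * x + b * y) - κ * (Q + (a * x + b * y) - dh)
        = a * (π * x - κ * (Q + x - dh)) + b * (π * y - κ * (Q + y - dh)) := by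
      linear_combination (κ * (Q - dh)) * hab
    have e2 : π * (a * x + b * y) = a * (π * x) + b * (π * y) := by ring
    rw [hU, hU, hU, e1, e2]
    nlinarith [H1, H2]
  intro q hq
  exact hconv.le_max_of_mem_Icc (Set.left_mem_Icc.2 hD.le) (Set.right_mem_Icc.2 hD.le) hq
end

section
/- Fix 0 < β < 1, λ ≥ 1, κ > π > 0, d_h > Q, and weights w_1, w_2 > 0. If w_2 π^β > λ w_1 (κ-π)^β · (1 + κ(d_h - Q)/((κ-π)(Q - d_l)))^{β-1}, then the seller's PT utility U(q) = -λ w_1 ((κ-π)q + κ(d_h-Q))^β + w_2 (π q)^β is strictly increasing on (0, Q - d_l), so its maximum over [0, Q - d_l] is attained at q = Q - d_l. -/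
/-!
Write `U q = -A (k q + c)^β + B (p q)^β` with `A = λ w₁`, `k = κ - π`, `c = κ (d_h - Q)`,
`B = w₂`, `p = π`. Factoring `q^(β-1)` out of the derivative,
`U'(q) = β q^(β-1) (B p^β - A k^β (1 + c/(k q))^(β-1))`, and since `β - 1 < 0` the bracket
decreases in `q`; so the boundary condition at `q = Q - d_l` makes it positive on the whole
interval `(0, Q - d_l)`.
-/

open Set

namespace Real

variable {β k c p q : ℝ}

lemma mul_mul_rpow_sub_one (hk : 0 < k) (hq : 0 ≤ q) :
    k * (k * q) ^ (β - 1) = k ^ β * q ^ (β - 1) := by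
  rw [mul_rpow hk.le hq, rpow_sub_one hk.ne']
  field_simp

lemma mul_mul_add_rpow_sub_one (hk : 0 < k) (hq : 0 < q) (hc : 0 ≤ c) :
    k * (k * q + c) ^ (β - 1) = q ^ (β - 1) * (k ^ β * (1 + c / (k * q)) ^ (β - 1)) := by
  have hsplit : k * q + c = k * q * (1 + c / (k * q)) := by field_simp
  rw [hsplit, mul_rpow (by positivity) (by positivity), ← mul_assoc,
    mul_mul_rpow_sub_one hk hq.le]
  ring

end Real

section SellerUtility

variable {β A B k c p : ℝ}

lemma hasDerivAt_neg_mul_rpow_add_mul_rpow {q : ℝ} (h₁ : k * q + c ≠ 0) (h₂ : p * q ≠ 0) :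
    HasDerivAt (fun q => -A * (k * q + c) ^ β + B * (p * q) ^ β)
      (β * (B * (p * (p * q) ^ (β - 1)) - A * (k * (k * q + c) ^ (β - 1)))) q := by
  have hlin₁ := ((hasDerivAt_id q).const_mul k).add_const c
  have hlin₂ := (hasDerivAt_id q).const_mul p
  refine (((hlin₁.rpow_const (p := β) (Or.inl h₁)).const_mul (-A)).add
    ((hlin₂.rpow_const (p := β) (Or.inl h₂)).const_mul B)).congr_deriv ?_
  simp only [id]
  ring

lemma marginal_loss_lt_marginal_gain {x q : ℝ} (hβ1 : β < 1) (hA : 0 ≤ A) (hk : 0 < k)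
    (hc : 0 ≤ c) (hp : 0 < p) (hq : 0 < q) (hqx : q < x)
    (hcond : A * k ^ β * (1 + c / (k * x)) ^ (β - 1) < B * p ^ β) :
    A * (k * (k * q + c) ^ (β - 1)) < B * (p * (p * q) ^ (β - 1)) := by
  have hx : 0 < x := hq.trans hqx
  have hdecr : (1 + c / (k * q)) ^ (β - 1) ≤ (1 + c / (k * x)) ^ (β - 1) := by
    apply Real.rpow_le_rpow_of_nonpos (by positivity) _ (by linarith)
    gcongr
  rw [Real.mul_mul_add_rpow_sub_one hk hq hc, Real.mul_mul_rpow_sub_one hp hq.le]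
  calc A * (q ^ (β - 1) * (k ^ β * (1 + c / (k * q)) ^ (β - 1)))
      = q ^ (β - 1) * (A * k ^ β * (1 + c / (k * q)) ^ (β - 1)) := by ring
    _ ≤ q ^ (β - 1) * (A * k ^ β * (1 + c / (k * x)) ^ (β - 1)) := by gcongr
    _ < q ^ (β - 1) * (B * p ^ β) := by gcongr
    _ = B * (p ^ β * q ^ (β - 1)) := by ring

lemma strictMonoOn_neg_mul_rpow_add_mul_rpow {x : ℝ} (hβ0 : 0 < β) (hβ1 : β < 1) (hA : 0 ≤ A)
    (hk : 0 < k) (hc : 0 ≤ c) (hp : 0 < p)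
    (hcond : A * k ^ β * (1 + c / (k * x)) ^ (β - 1) < B * p ^ β) :
    StrictMonoOn (fun q => -A * (k * q + c) ^ β + B * (p * q) ^ β) (Icc 0 x) := by
  have hpow := Real.continuous_rpow_const hβ0.le
  refine strictMonoOn_of_deriv_pos (convex_Icc 0 x) (Continuous.continuousOn (by fun_prop)) ?_
  rw [interior_Icc]
  rintro q ⟨hq, hqx⟩
  rw [(hasDerivAt_neg_mul_rpow_add_mul_rpow (by positivity) (by positivity)).deriv]
  exact mul_pos hβ0 (sub_pos.2 (marginal_loss_lt_marginal_gain hβ1 hA hk hc hp hq hqx hcond))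

end SellerUtility

theorem seller_high_ref_corner_general (β lam κ π Q dl dh w1 w2 : ℝ)
    (hβ0 : 0 < β) (hβ1 : β < 1) (hlam : 1 ≤ lam)
    (hπ : 0 < π) (hκ : π < κ) (hdh : Q < dh)
    (hw1 : 0 < w1)
    (hcond : lam * w1 * (κ - π) ^ β *
        (1 + κ * (dh - Q) / ((κ - π) * (Q - dl))) ^ (β - 1) < w2 * π ^ β)
    (U : ℝ → ℝ)
    (hU : ∀ q : ℝ, U q =
      -lam * w1 * ((κ - π) * q + κ * (dh - Q)) ^ β + w2 * (π * q) ^ β) :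
    StrictMonoOn U (Set.Ioo 0 (Q - dl)) ∧
      ∀ q ∈ Set.Icc (0:ℝ) (Q - dl), U q ≤ U (Q - dl) := by
  have hU' : U = fun q => -(lam * w1) * ((κ - π) * q + κ * (dh - Q)) ^ β + w2 * (π * q) ^ β := by
    funext q
    rw [hU]
    ring
  have hmono : StrictMonoOn U (Icc 0 (Q - dl)) := by
    rw [hU']
    exact strictMonoOn_neg_mul_rpow_add_mul_rpow hβ0 hβ1 (mul_nonneg (by linarith) hw1.le) (by linarith)
      (mul_nonneg (by linarith) (by linarith)) hπ hcond
  exact ⟨hmono.mono Ioo_subset_Icc_self, fun q hq =>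
    hmono.monotoneOn hq (right_mem_Icc.2 (hq.1.trans hq.2)) hq.2⟩

/-- If the boundary condition holds, the seller's PT utility with high reference
point is strictly increasing on (0, Q - d_l), so maximized at q = Q - d_l. -/
theorem seller_high_ref_corner (β lam κ π Q dl dh w1 w2 : ℝ)
    (hβ0 : 0 < β) (hβ1 : β < 1) (hlam : 1 ≤ lam)
    (hπ : 0 < π) (hκ : π < κ) (hdl : dl < Q) (hdh : Q < dh)
    (hw1 : 0 < w1) (hw2 : 0 < w2)
    (hcond : lam * w1 * (κ - π) ^ β *
        (1 + κ * (dh - Q) / ((κ - π) * (Q - dl))) ^ (β - 1) < w2 * π ^ β)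
    (U : ℝ → ℝ)
    (hU : ∀ q : ℝ, U q =
      -lam * w1 * ((κ - π) * q + κ * (dh - Q)) ^ β + w2 * (π * q) ^ β) :
    StrictMonoOn U (Set.Ioo 0 (Q - dl)) ∧
      ∀ q ∈ Set.Icc (0:ℝ) (Q - dl), U q ≤ U (Q - dl) :=
  seller_high_ref_corner_general β lam κ π Q dl dh w1 w2 hβ0 hβ1 hlam hπ hκ hdh hw1 hcond U hU
end

section
/- Fix κ > 0, 0 < p < 1, β ∈ (0,1], λ ≥ 1, weights w_1 = w(p), w_2 = w(1-p) > 0, and d_l < Q < d_h. Define F(π) = λ(κ - π)^β w_1 / (π^β w_2) · (1 + κ(d_h - Q)/((κ - π)(Q - d_l)))^{β-1} for π ∈ (0, κ). Then F is strictly decreasing in π, lim_{π→0⁺} F(π) = +∞ and lim_{π→κ⁻} F(π) = 0; hence the equation F(π) = 1 has a unique solution π̄_s^{PTh} ∈ (0, κ). -/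
open Filter Topology Set

/-!
Writing `A = κ (d_h - Q) / (Q - d_l)` and `t = κ - π`, the distortion factor becomes
`t^β (1 + A/t)^(β-1) = g(t) := t/(t+A) · (t+A)^β`, a product of two positive increasing
functions of `t`. Hence `F(π) = C π^(-β) g(κ - π)` with `C = λ w₁ / w₂` is a product of positive
strictly decreasing functions of `π`; it blows up at `0⁺` like `π^(-β)` and vanishes at `κ⁻`
since `g(0) = 0`. Being continuous, it crosses `1` exactly once.
-/

theorem existsUnique_mem_Ioo_eq_of_strictAntiOn {α δ : Type*}
    [ConditionallyCompleteLinearOrder α] [TopologicalSpace α] [OrderTopology α] [DenselyOrdered α]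
    [LinearOrder δ] [TopologicalSpace δ] [OrderTopology δ] {f : α → δ} {a b : α} {l c : δ}
    (hab : a < b) (hf : StrictAntiOn f (Ioo a b)) (hcont : ContinuousOn f (Ioo a b))
    (hfa : Tendsto f (𝓝[>] a) atTop) (hfb : Tendsto f (𝓝[<] b) (𝓝 l)) (hlc : l < c) :
    ∃! x, x ∈ Ioo a b ∧ f x = c := by
  have := nhdsLT_neBot_of_exists_lt ⟨a, hab⟩
  have := nhdsGT_neBot_of_exists_gt ⟨b, hab⟩
  obtain ⟨x, hxc, hx⟩ :=
    ((hfb.eventually_lt_const hlc).and (Ioo_mem_nhdsLT hab)).exists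
  obtain ⟨y, hyc, hy⟩ := ((hfa.eventually_ge_atTop c).and (Ioo_mem_nhdsGT hab)).exists
  obtain ⟨z, hz, hfz⟩ := isPreconnected_Ioo.intermediate_value hx hy hcont ⟨hxc.le, hyc⟩
  exact ⟨z, ⟨hz, hfz⟩, fun w ⟨hw, hfw⟩ => hf.injOn hw hz (hfw.trans hfz.symm)⟩

noncomputable def gainFactor (A β t : ℝ) : ℝ := t / (t + A) * (t + A) ^ β

section gainFactor

variable {A β t : ℝ}

theorem rpow_mul_one_add_div_rpow_eq_gainFactor (ht : 0 < t) (htA : 0 < t + A) :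
    t ^ β * (1 + A / t) ^ (β - 1) = gainFactor A β t := by
  have hsplit : ∀ s : ℝ, 0 < s → s ^ β = s ^ (β - 1) * s := fun s hs => by
    rw [← Real.rpow_add_one hs.ne', sub_add_cancel]
  rw [gainFactor, show 1 + A / t = (t + A) / t by field_simp, Real.div_rpow htA.le ht.le,
    hsplit t ht, hsplit _ htA]
  have := (Real.rpow_pos_of_pos ht (β - 1)).ne'
  field_simp

theorem gainFactor_pos (hA : 0 < A) (ht : 0 < t) : 0 < gainFactor A β t := by
  unfold gainFactor; positivity

theorem gainFactor_zero : gainFactor A β 0 = 0 := by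
  simp [gainFactor]

theorem strictMonoOn_gainFactor (hA : 0 < A) (hβ : 0 < β) :
    StrictMonoOn (gainFactor A β) (Ioi 0) := by
  intro s (hs : 0 < s) t ht hst
  have hratio : s / (s + A) < t / (t + A) := by
    rw [div_lt_div_iff₀ (by linarith) (by linarith)]; nlinarith
  have hpow : (s + A) ^ β < (t + A) ^ β := Real.rpow_lt_rpow (by linarith) (by linarith) hβ
  exact mul_lt_mul'' hratio hpow (by positivity) (by positivity)

theorem continuousAt_gainFactor (htA : 0 < t + A) : ContinuousAt (gainFactor A β) t := by
  unfold gainFactor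
  have := htA.ne'
  fun_prop (disch := simp_all)

end gainFactor

noncomputable def thresholdRatio (C A β κ π : ℝ) : ℝ :=
  C * (π ^ (-β) * gainFactor A β (κ - π))

section thresholdRatio

variable {C A β κ π : ℝ}

theorem strictAntiOn_thresholdRatio (hC : 0 < C) (hA : 0 < A) (hβ : 0 < β) :
    StrictAntiOn (thresholdRatio C A β κ) (Ioo 0 κ) := by
  rintro x ⟨hx, hxκ⟩ y ⟨hy, hyκ⟩ hxy
  have hpow : y ^ (-β) < x ^ (-β) := Real.rpow_lt_rpow_of_neg hx hxy (neg_neg_of_pos hβ)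
  have hgain : gainFactor A β (κ - y) < gainFactor A β (κ - x) :=
    strictMonoOn_gainFactor hA hβ (sub_pos.2 hyκ) (sub_pos.2 hxκ) (by linarith)
  have := gainFactor_pos (β := β) hA (sub_pos.2 hyκ)
  exact mul_lt_mul_of_pos_left (mul_lt_mul'' hpow hgain (by positivity) this.le) hC

theorem continuousAt_thresholdRatio (hπ : 0 < π) (hπA : 0 < κ - π + A) :
    ContinuousAt (thresholdRatio C A β κ) π :=
  continuousAt_const.mul <| (Real.continuousAt_rpow_const _ _ (Or.inl hπ.ne')).mul <|
    (continuousAt_gainFactor hπA).comp (continuousAt_const.sub continuousAt_id)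

theorem tendsto_thresholdRatio_nhdsGT_zero (hC : 0 < C) (hA : 0 < A) (hβ : 0 < β)
    (hκ : 0 < κ) :
    Tendsto (thresholdRatio C A β κ) (𝓝[>] 0) atTop := by
  have hgain : Tendsto (fun π => gainFactor A β (κ - π)) (𝓝[>] 0) (𝓝 (gainFactor A β κ)) := by
    have hsub : Tendsto (fun π : ℝ => κ - π) (𝓝[>] 0) (𝓝 κ) := by
      simpa using ((continuous_sub_left κ).tendsto 0).mono_left nhdsWithin_le_nhds
    exact (continuousAt_gainFactor (add_pos hκ hA)).tendsto.comp hsub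
  exact ((tendsto_rpow_neg_nhdsGT_zero (neg_neg_of_pos hβ)).atTop_mul_pos
    (gainFactor_pos hA hκ) hgain).const_mul_atTop hC

theorem tendsto_thresholdRatio_nhdsLT (hA : 0 < A) (hκ : 0 < κ) :
    Tendsto (thresholdRatio C A β κ) (𝓝[<] κ) (𝓝 0) := by
  have hcont : ContinuousAt (thresholdRatio C A β κ) κ :=
    continuousAt_thresholdRatio hκ (by simpa using hA)
  simpa [thresholdRatio, gainFactor_zero] using hcont.tendsto.mono_left nhdsWithin_le_nhds

end thresholdRatio

theorem seller_threshold_high_unique_general (β lam κ Q dl dh w1 w2 : ℝ)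
    (hβ0 : 0 < β) (hlam : 1 ≤ lam) (hκ : 0 < κ)
    (hdl : dl < Q) (hdh : Q < dh) (hw1 : 0 < w1) (hw2 : 0 < w2)
    (F : ℝ → ℝ)
    (hF : ∀ π : ℝ, F π =
      lam * (κ - π) ^ β * w1 / (π ^ β * w2) *
        (1 + κ * (dh - Q) / ((κ - π) * (Q - dl))) ^ (β - 1)) :
    StrictAntiOn F (Set.Ioo 0 κ) ∧
      Filter.Tendsto F (nhdsWithin 0 (Set.Ioi 0)) Filter.atTop ∧
      Filter.Tendsto F (nhdsWithin κ (Set.Iio κ)) (nhds 0) ∧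
      ∃! π : ℝ, π ∈ Set.Ioo (0:ℝ) κ ∧ F π = 1 := by
  set A := κ * (dh - Q) / (Q - dl)
  set C := lam * w1 / w2
  have hA : 0 < A := div_pos (mul_pos hκ (by linarith)) (by linarith)
  have hC : 0 < C := div_pos (mul_pos (by linarith) hw1) hw2
  have hFeq : EqOn (thresholdRatio C A β κ) F (Ioo 0 κ) := by
    rintro π ⟨hπ, hπκ⟩
    have hκπ : 0 < κ - π := sub_pos.2 hπκ
    rw [hF, thresholdRatio, ← rpow_mul_one_add_div_rpow_eq_gainFactor hκπ (by linarith),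
      Real.rpow_neg hπ.le, div_mul_eq_div_div_swap (κ * (dh - Q))]
    simp only [C]
    ring
  have hev : ∀ {l : Filter ℝ}, Ioo 0 κ ∈ l → thresholdRatio C A β κ =ᶠ[l] F :=
    fun h => eventuallyEq_of_mem h hFeq
  have hanti := (strictAntiOn_thresholdRatio hC hA hβ0).congr hFeq
  have hzero :=
    (tendsto_thresholdRatio_nhdsGT_zero hC hA hβ0 hκ).congr' (hev (Ioo_mem_nhdsGT hκ))
  have hkappa := (tendsto_thresholdRatio_nhdsLT hA hκ).congr' (hev (Ioo_mem_nhdsLT hκ))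
  have hcont : ContinuousOn F (Ioo 0 κ) := fun π ⟨hπ, hπκ⟩ =>
    ((continuousAt_thresholdRatio hπ (by linarith)).congr
      (hev (Ioo_mem_nhds hπ hπκ))).continuousWithinAt
  exact ⟨hanti, hzero, hkappa,
    existsUnique_mem_Ioo_eq_of_strictAntiOn hκ hanti hcont hzero hkappa zero_lt_one⟩

/-- The seller's PT high-reference-point threshold price exists and is unique:
F is strictly decreasing on (0, κ) with F → ∞ at 0⁺ and F → 0 at κ⁻, so F = 1
has a unique solution in (0, κ). -/
theorem seller_threshold_high_unique (β lam κ Q dl dh w1 w2 p : ℝ)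
    (hβ0 : 0 < β) (hβ1 : β ≤ 1) (hlam : 1 ≤ lam) (hκ : 0 < κ)
    (hp0 : 0 < p) (hp1 : p < 1)
    (hdl : dl < Q) (hdh : Q < dh) (hw1 : 0 < w1) (hw2 : 0 < w2)
    (F : ℝ → ℝ)
    (hF : ∀ π : ℝ, F π =
      lam * (κ - π) ^ β * w1 / (π ^ β * w2) *
        (1 + κ * (dh - Q) / ((κ - π) * (Q - dl))) ^ (β - 1)) :
    StrictAntiOn F (Set.Ioo 0 κ) ∧
      Filter.Tendsto F (nhdsWithin 0 (Set.Ioi 0)) Filter.atTop ∧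
      Filter.Tendsto F (nhdsWithin κ (Set.Iio κ)) (nhds 0) ∧
      ∃! π : ℝ, π ∈ Set.Ioo (0:ℝ) κ ∧ F π = 1 :=
  seller_threshold_high_unique_general β lam κ Q dl dh w1 w2 hβ0 hlam hκ hdl hdh hw1 hw2 F hF
end
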